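/- If the random subgraph H is uniformly distributed on the event C in the bunkbed graph of G_2^k, then the contracted subgraph \gamma(H) is distributed as the conditioned bunkbed model \mathcal{E}_T on G_1 with T = \{2,5,8\}: i.e., \gamma(H) is a uniformly random subgraph of \overline{G_1} conditioned on containing the three vertical edges at 2, 5, 8. -/

import Mathlib

/-- Edges of the bunkbed graph of a directed graph on vertex type `V`:
`horiz u v ε` is the copy of the directed edge `(u,v)` in bunk `ε`
(`false` = lower bunk `-`, `true` = upper bunk `+`); `vert w` is the
bidirected vertical edge `(w⁻, w⁺)`. -/
inductive BBEdge (V : Type) : Type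
  | horiz : V → V → Bool → BBEdge V
  | vert  : V → BBEdge V
deriving DecidableEq

/-- The `F`-mirroring map on single edges: vertical edges are fixed, a horizontal
edge whose shadow lies in `F` is sent to its mirrored copy in the other bunk, and
horizontal edges with shadow outside `F` are fixed. -/
def mir {V : Type} [DecidableEq V] (F : Finset (V × V)) : BBEdge V → BBEdge V
  | .horiz u v ε => if (u, v) ∈ F then .horiz u v (!ε) else .horiz u v ε
  | .vert w => .vert w

/-- The `F`-mirrored subgraph `M(H,F)`. -/
def M {V : Type} [DecidableEq V] (H : Finset (BBEdge V)) (F : Finset (V × V)) :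
    Finset (BBEdge V) :=
  H.image (mir F)
/-- The edge set of the bunkbed graph of the directed graph with vertex set `Vs`
and edge set `E`: the vertical edges at all vertices together with the two
horizontal copies of each edge. -/
def bbEdges {V : Type} [DecidableEq V] (Vs : Finset V) (E : Finset (V × V)) :
    Finset (BBEdge V) :=
  Vs.image BBEdge.vert ∪ E.image (fun p => BBEdge.horiz p.1 p.2 false) ∪
    E.image (fun p => BBEdge.horiz p.1 p.2 true)
/-- Probability of the event `A` under uniform (`p = 1/2`) Bernoulli bond
percolation on the edge set `s`: a subgraph is a uniformly random subset of `s`. -/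
noncomputable def Pr {V : Type} [DecidableEq V] (s : Finset (BBEdge V))
    (A : Finset (BBEdge V) → Prop) : ℚ :=
  letI := Classical.decPred A
  ((s.powerset.filter A).card : ℚ) / (s.powerset.card : ℚ)

/-- Conditional probability of `A` given `C` under uniform percolation on `s`. -/
noncomputable def CondPr {V : Type} [DecidableEq V] (s : Finset (BBEdge V))
    (C A : Finset (BBEdge V) → Prop) : ℚ :=
  Pr s (fun H => A H ∧ C H) / Pr s C
/-- The conditioning event of the conditioned bunkbed model `𝓔_T`: all vertices
of `T` are posts. -/
def postCond {V : Type} [DecidableEq V] (T : Finset V)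
    (H : Finset (BBEdge V)) : Prop :=
  ∀ t ∈ T, BBEdge.vert t ∈ H

/-- The edge set of the graph `G₁` of Przybyłowski's counterexample, on
vertices `1,…,9`. -/
def E1 : Finset (ℕ × ℕ) :=
  {(1,2), (1,4), (2,3), (3,4), (4,5), (3,7), (5,6), (6,7), (6,9), (7,8), (8,9)}

/-- The vertex set of `G₁`. -/
def V1 : Finset ℕ := {1, 2, 3, 4, 5, 6, 7, 8, 9}

/-- The conditioning set `T = {2,5,8}`. -/
def T1 : Finset ℕ := {2, 5, 8}

/-- The vertices of `G₁` that are blown up into gadgets. -/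
def gset : Finset ℕ := {2, 5, 8}

/-- Vertices of the blown-up graph `G₂ᵏ`: `orig n` is an untouched vertex `n` of
`G₁`; for `i ∈ {2,5,8}`, `ga i` is the entry vertex `i_a`, `gb i` the exit vertex
`i_b`, and `mid i j` the middle vertex `i_j`. -/
inductive GV : Type
  | orig : ℕ → GV
  | ga : ℕ → GV
  | gb : ℕ → GV
  | mid : ℕ → ℕ → GV
deriving DecidableEq

/-- The vertex of `G₂ᵏ` from which the copies of the out-edges of `x` leave. -/
def srcV (x : ℕ) : GV := if x ∈ gset then .gb x else .orig x

/-- The vertex of `G₂ᵏ` to which the copies of the in-edges of `y` point. -/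
def tgtV (y : ℕ) : GV := if y ∈ gset then .ga y else .orig y

/-- The edge set of `G₂ᵏ`: every edge `(x,y)` of `G₁` becomes an edge from `srcV x`
to `tgtV y`, and each gadget `i ∈ {2,5,8}` gets internal edges `(i_a, i_j)` and
`(i_j, i_b)` for `j ∈ {1,…,k}`. -/
def E2 (k : ℕ) : Finset (GV × GV) :=
  E1.image (fun p => (srcV p.1, tgtV p.2)) ∪
    (gset ×ˢ Finset.Icc 1 k).image (fun p => (GV.ga p.1, GV.mid p.1 p.2)) ∪
    (gset ×ˢ Finset.Icc 1 k).image (fun p => (GV.mid p.1 p.2, GV.gb p.1))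

/-- The vertex set of `G₂ᵏ`. -/
def Vs2 (k : ℕ) : Finset GV :=
  (V1 \ gset).image GV.orig ∪ gset.image GV.ga ∪ gset.image GV.gb ∪
    (gset ×ˢ Finset.Icc 1 k).image (fun p => GV.mid p.1 p.2)

/-- The event `C`: for each `i ∈ {2,5,8}` there is some `j ∈ {1,…,k}` such that all
five edges `(i_j⁻, i_j⁺)`, `(i_a^±, i_j^±)`, `(i_j^±, i_b^±)` are retained. -/
def Cev (k : ℕ) (H : Finset (BBEdge GV)) : Prop :=
  ∀ i ∈ gset, ∃ j ∈ Finset.Icc 1 k,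
    BBEdge.vert (GV.mid i j) ∈ H ∧
    BBEdge.horiz (GV.ga i) (GV.mid i j) false ∈ H ∧
    BBEdge.horiz (GV.ga i) (GV.mid i j) true ∈ H ∧
    BBEdge.horiz (GV.mid i j) (GV.gb i) false ∈ H ∧
    BBEdge.horiz (GV.mid i j) (GV.gb i) true ∈ H

/-- The quotient map contracting each gadget to its original vertex of `G₁`. -/
def qmap : GV → ℕ
  | .orig n => n
  | .ga i => i
  | .gb i => i
  | .mid i _ => i

/-- The induced map on bunkbed edges. -/
def contrEdge : BBEdge GV → BBEdge ℕ
  | .horiz x y ε => .horiz (qmap x) (qmap y) ε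
  | .vert w => .vert (qmap w)

/-- Whether a bunkbed edge is not a loop. -/
def notLoop : BBEdge ℕ → Prop
  | .horiz x y _ => x ≠ y
  | .vert _ => True

/-- The contraction `γ(H)` of a subgraph `H` of the bunkbed graph of `G₂ᵏ`: for each
`i ∈ {2,5,8}` and each bunk, the vertices `i_a, i_b, i_1, …, i_k` are contracted to
the single vertex `i`, retained edges map accordingly, and loops are erased. -/
noncomputable def contr (H : Finset (BBEdge GV)) : Finset (BBEdge ℕ) :=
  letI := Classical.decPred notLoop
  (H.image contrEdge).filter notLoop

/-!
Split the edges of the bunkbed graph of `G₂ᵏ` into the outer edges, the lifts of the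
edges of the bunkbed graph of `G₁` other than the posts at `T`, and the gadget edges.
Every edge in the definition of `C` touches a middle vertex and no outer edge does, so `C`
depends only on the gadget edges. On `C` the contraction sends the gadget edges exactly
onto the three posts at `T` (all others become loops) and the outer edges bijectively back
to their shadows. Hence, given `C`, `γ(H)` is a uniformly random set of non-post edges of
`G₁` together with the posts, which is the law of `𝓔_T`.
-/

open Finset

section Uniform

variable {α : Type*}

theorem card_filter_powerset_union [DecidableEq α] {u v : Finset α} (huv : Disjoint u v)
    {P Q R : Finset α → Prop} [DecidablePred P] [DecidablePred Q] [DecidablePred R]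
    (h : ∀ a ⊆ u, ∀ b ⊆ v, P (a ∪ b) ↔ Q a ∧ R b) :
    #{H ∈ (u ∪ v).powerset | P H} = #{a ∈ u.powerset | Q a} * #{b ∈ v.powerset | R b} := by
  have hsplit : ∀ H ⊆ u ∪ v, (H ∩ u) ∪ (H ∩ v) = H := fun H hH => by
    rw [← inter_union_distrib_left, inter_eq_left.mpr hH]
  rw [← card_product]
  refine card_nbij' (fun H => (H ∩ u, H ∩ v)) (fun p => p.1 ∪ p.2) ?_ ?_ ?_ ?_
  · intro H hH
    simp only [mem_coe, mem_filter, mem_powerset] at hH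
    have := (h _ inter_subset_right _ inter_subset_right).mp (hsplit H hH.1 ▸ hH.2)
    simp only [mem_coe, mem_product, mem_filter, mem_powerset]
    exact ⟨⟨inter_subset_right, this.1⟩, inter_subset_right, this.2⟩
  · rintro ⟨a, b⟩ hab
    simp only [mem_coe, mem_product, mem_filter, mem_powerset] at hab ⊢
    exact ⟨union_subset_union hab.1.1 hab.2.1,
      (h a hab.1.1 b hab.2.1).mpr ⟨hab.1.2, hab.2.2⟩⟩
  · intro H hH
    exact hsplit H (mem_powerset.mp (mem_filter.mp hH).1)
  · rintro ⟨a, b⟩ hab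
    simp only [mem_coe, mem_product, mem_filter, mem_powerset] at hab
    have hav : a ∩ v = ∅ := disjoint_iff_inter_eq_empty.mp (huv.mono_left hab.1.1)
    have hbu : b ∩ u = ∅ := disjoint_iff_inter_eq_empty.mp (huv.symm.mono_left hab.2.1)
    simp only [union_inter_distrib_right, inter_eq_left.mpr hab.1.1, inter_eq_left.mpr hab.2.1,
      hav, hbu, union_empty, empty_union]

theorem card_filter_powerset_image {β : Type*} [DecidableEq β] {f : α → β}
    (hf : Function.Injective f) (s : Finset α) (P : Finset β → Prop) [DecidablePred P] :
    #{t ∈ (s.image f).powerset | P t} = #{t ∈ s.powerset | P (t.image f)} := by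
  rw [powerset_image, filter_image, card_image_of_injective _ (image_injective hf)]

variable {W : Type} [DecidableEq W]

theorem condPr_eq_card_div (s : Finset (BBEdge W)) (C A : Finset (BBEdge W) → Prop)
    [DecidablePred C] [DecidablePred A] :
    CondPr s C A = #{H ∈ s.powerset | A H ∧ C H} / #{H ∈ s.powerset | C H} := by
  have hs : (#s.powerset : ℚ) ≠ 0 := by positivity
  simp only [CondPr, Pr]
  rw [div_div_div_cancel_right₀ hs]
  congr!

theorem condPr_comp_of_disjoint_union {β : Type*} {u v : Finset (BBEdge W)} (huv : Disjoint u v)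
    {C R : Finset (BBEdge W) → Prop} (hC : ∀ a ⊆ u, ∀ b ⊆ v, C (a ∪ b) ↔ R b)
    (hR : ∃ b ⊆ v, R b) {f g : Finset (BBEdge W) → β}
    (hfg : ∀ a ⊆ u, ∀ b ⊆ v, R b → f (a ∪ b) = g a)
    (A : β → Prop) [DecidablePred A] :
    CondPr (u ∪ v) C (fun H => A (f H)) = #{a ∈ u.powerset | A (g a)} / 2 ^ #u := by
  classical
  have hnum := card_filter_powerset_union huv (P := fun H => A (f H) ∧ C H)
    (Q := fun a => A (g a)) (R := R) fun a ha b hb => by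
      rw [hC a ha b hb]
      exact and_congr_left fun hRb => by rw [hfg a ha b hb hRb]
  have hden := card_filter_powerset_union huv (P := C) (Q := fun _ => True) (R := R)
    fun a ha b hb => by rw [hC a ha b hb, true_and]
  have hRpos : (#{b ∈ v.powerset | R b} : ℚ) ≠ 0 := by
    obtain ⟨b, hb, hRb⟩ := hR
    exact_mod_cast (card_pos.mpr ⟨b, mem_filter.mpr ⟨mem_powerset.mpr hb, hRb⟩⟩).ne'
  rw [condPr_eq_card_div, hnum, hden, filter_true, card_powerset]
  push_cast
  exact mul_div_mul_right _ _ hRpos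

end Uniform

section Bunkbed

variable {V : Type} [DecidableEq V]

def vertEdges (T : Finset V) : Finset (BBEdge V) := T.image BBEdge.vert

theorem postCond_iff_vertEdges_subset (T : Finset V) (H : Finset (BBEdge V)) :
    postCond T H ↔ vertEdges T ⊆ H := by
  simp [postCond, vertEdges, image_subset_iff]

theorem vertEdges_subset_bbEdges {Vs T : Finset V} (E : Finset (V × V)) (hT : T ⊆ Vs) :
    vertEdges T ⊆ bbEdges Vs E :=
  (image_subset_image hT).trans (subset_union_left.trans subset_union_left)

theorem condPr_postCond {Vs T : Finset V} (E : Finset (V × V)) (hT : T ⊆ Vs)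
    (A : Finset (BBEdge V) → Prop) [DecidablePred A] :
    CondPr (bbEdges Vs E) (postCond T) A =
      #{c ∈ (bbEdges Vs E \ vertEdges T).powerset | A (c ∪ vertEdges T)} /
        2 ^ #(bbEdges Vs E \ vertEdges T) := by
  have hC : ∀ a ⊆ bbEdges Vs E \ vertEdges T, ∀ b ⊆ vertEdges T,
      postCond T (a ∪ b) ↔ vertEdges T ⊆ b := fun a ha b _ => by
    rw [postCond_iff_vertEdges_subset]
    exact ⟨fun h => Disjoint.left_le_of_le_sup_left h (disjoint_sdiff.mono_right ha),
      fun h => h.trans subset_union_right⟩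
  have hsplit := condPr_comp_of_disjoint_union sdiff_disjoint hC ⟨_, subset_rfl, subset_rfl⟩
    (f := id) (g := (· ∪ vertEdges T)) (fun a _ b hb hTb => by rw [id, subset_antisymm hb hTb]) A
  rwa [sdiff_union_of_subset (vertEdges_subset_bbEdges E hT)] at hsplit

end Bunkbed

def liftEdge : BBEdge ℕ → BBEdge GV
  | .horiz x y ε => .horiz (srcV x) (tgtV y) ε
  | .vert n => .vert (.orig n)

theorem qmap_srcV (x : ℕ) : qmap (srcV x) = x := by unfold srcV; split <;> rfl

theorem qmap_tgtV (y : ℕ) : qmap (tgtV y) = y := by unfold tgtV; split <;> rfl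

theorem contrEdge_liftEdge (e : BBEdge ℕ) : contrEdge (liftEdge e) = e := by
  cases e with
  | horiz x y ε => simp only [liftEdge, contrEdge, qmap_srcV, qmap_tgtV]
  | vert n => rfl

theorem liftEdge_injective : Function.Injective liftEdge :=
  Function.LeftInverse.injective contrEdge_liftEdge

theorem contr_union (a b : Finset (BBEdge GV)) : contr (a ∪ b) = contr a ∪ contr b := by
  simp only [contr, image_union, filter_union]

theorem E1_loopless : ∀ p ∈ E1, p.1 ≠ p.2 := by decide

theorem contr_image_liftEdge {c : Finset (BBEdge ℕ)} (hc : c ⊆ bbEdges V1 E1) :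
    contr (c.image liftEdge) = c := by
  classical
  rw [contr, image_image, show contrEdge ∘ liftEdge = id from funext contrEdge_liftEdge,
    image_id, filter_true_of_mem]
  intro e he
  have := hc he
  simp only [bbEdges, mem_union, mem_image] at this
  rcases this with (⟨_, _, rfl⟩ | ⟨p, hp, rfl⟩) | ⟨p, hp, rfl⟩
  · trivial
  all_goals exact E1_loopless p hp

theorem T1_eq_gset : T1 = gset := rfl

def outerEdges : Finset (BBEdge GV) := (bbEdges V1 E1 \ vertEdges T1).image liftEdge

def gadgetEdges (k : ℕ) : Finset (BBEdge GV) := bbEdges (Vs2 k) (E2 k) \ outerEdges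

theorem liftEdge_mem_outerEdges {e : BBEdge ℕ} (he : e ∈ bbEdges V1 E1)
    (hT : e ∉ vertEdges T1) : liftEdge e ∈ outerEdges :=
  mem_image_of_mem _ (mem_sdiff.mpr ⟨he, hT⟩)

theorem outerEdges_subset_bbEdges (k : ℕ) : outerEdges ⊆ bbEdges (Vs2 k) (E2 k) := by
  rintro _ ho
  obtain ⟨e, he, rfl⟩ := mem_image.mp ho
  obtain ⟨he, hT⟩ := mem_sdiff.mp he
  simp only [bbEdges, mem_union, mem_image] at he ⊢
  rcases he with (⟨n, hn, rfl⟩ | ⟨p, hp, rfl⟩) | ⟨p, hp, rfl⟩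
  · have hn' : n ∉ gset := fun h => hT (mem_image_of_mem _ h)
    exact Or.inl (Or.inl ⟨.orig n, by simp [Vs2, hn, hn'], rfl⟩)
  all_goals
    have hp₂ : (srcV p.1, tgtV p.2) ∈ E2 k := by
      simp only [E2, mem_union, mem_image]
      exact Or.inl (Or.inl ⟨p, hp, rfl⟩)
  · exact Or.inl (Or.inr ⟨_, hp₂, rfl⟩)
  · exact Or.inr ⟨_, hp₂, rfl⟩

def GV.IsMiddle : GV → Prop
  | .mid _ _ => True
  | _ => False

def TouchesMiddle : BBEdge GV → Prop
  | .horiz x y _ => x.IsMiddle ∨ y.IsMiddle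
  | .vert w => w.IsMiddle

theorem not_touchesMiddle_liftEdge (e : BBEdge ℕ) : ¬ TouchesMiddle (liftEdge e) := by
  cases e with
  | horiz x y ε =>
    simp only [liftEdge, TouchesMiddle, srcV, tgtV]
    split_ifs <;> simp [GV.IsMiddle]
  | vert n => exact id

theorem Cev.mono_of_touchesMiddle {k : ℕ} {H H' : Finset (BBEdge GV)}
    (h : ∀ e ∈ H, TouchesMiddle e → e ∈ H') (hC : Cev k H) : Cev k H' := by
  intro i hi
  obtain ⟨j, hj, h₁, h₂, h₃, h₄, h₅⟩ := hC i hi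
  exact ⟨j, hj, h _ h₁ trivial, h _ h₂ (Or.inr trivial), h _ h₃ (Or.inr trivial),
    h _ h₄ (Or.inl trivial), h _ h₅ (Or.inl trivial)⟩

theorem Cev_union_iff_right {k : ℕ} {a : Finset (BBEdge GV)} (ha : a ⊆ outerEdges)
    (b : Finset (BBEdge GV)) : Cev k (a ∪ b) ↔ Cev k b := by
  refine ⟨Cev.mono_of_touchesMiddle fun e he hm => (mem_union.mp he).resolve_left fun hea => ?_,
    Cev.mono_of_touchesMiddle fun e he _ => mem_union_right _ he⟩
  obtain ⟨e', -, rfl⟩ := mem_image.mp (ha hea)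
  exact not_touchesMiddle_liftEdge e' hm

theorem Cev_bbEdges {k : ℕ} (hk : 1 ≤ k) : Cev k (bbEdges (Vs2 k) (E2 k)) := by
  intro i hi
  refine ⟨1, mem_Icc.mpr ⟨le_rfl, hk⟩, ?_⟩
  simp [bbEdges, Vs2, E2, hi, hk]

theorem Cev_gadgetEdges {k : ℕ} (hk : 1 ≤ k) : Cev k (gadgetEdges k) :=
  (Cev_bbEdges hk).mono_of_touchesMiddle fun e he hm => mem_sdiff.mpr ⟨he, fun ho => by
    obtain ⟨e', -, rfl⟩ := mem_image.mp ho
    exact not_touchesMiddle_liftEdge e' hm⟩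

theorem contrEdge_mem_vertEdges_of_mem_gadgetEdges {k : ℕ} {e : BBEdge GV}
    (he : e ∈ gadgetEdges k) (hl : notLoop (contrEdge e)) : contrEdge e ∈ vertEdges T1 := by
  obtain ⟨he, ho⟩ := mem_sdiff.mp he
  rw [vertEdges, T1_eq_gset]
  simp only [bbEdges, mem_union, mem_image] at he
  rcases he with (⟨v, hv, rfl⟩ | ⟨p, hp, rfl⟩) | ⟨p, hp, rfl⟩
  · simp only [Vs2, mem_union, mem_image, mem_sdiff, mem_product] at hv
    rcases hv with
      ((⟨n, ⟨hn, hng⟩, rfl⟩ | ⟨i, hi, rfl⟩) | ⟨i, hi, rfl⟩) | ⟨q, hq, rfl⟩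
    · refine absurd (liftEdge_mem_outerEdges (e := .vert n) ?_ ?_) ho
      · simp [bbEdges, hn]
      · simpa [vertEdges, T1_eq_gset] using hng
    · exact mem_image_of_mem _ hi
    · exact mem_image_of_mem _ hi
    · exact mem_image_of_mem _ hq.1
  all_goals
    simp only [E2, mem_union, mem_image, mem_product] at hp
    rcases hp with (⟨q, hq, rfl⟩ | ⟨q, hq, rfl⟩) | ⟨q, hq, rfl⟩
    · refine absurd (liftEdge_mem_outerEdges (e := .horiz q.1 q.2 _) ?_ ?_) ho
      · simp [bbEdges, hq]
      · simp [vertEdges]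
    all_goals exact absurd rfl hl

theorem contr_eq_vertEdges_of_subset_gadgetEdges {k : ℕ} {b : Finset (BBEdge GV)}
    (hb : b ⊆ gadgetEdges k) (hC : Cev k b) : contr b = vertEdges T1 := by
  classical
  refine subset_antisymm (fun f hf => ?_) (fun f hf => ?_)
  · obtain ⟨hf, hl⟩ := mem_filter.mp hf
    obtain ⟨e, he, rfl⟩ := mem_image.mp hf
    exact contrEdge_mem_vertEdges_of_mem_gadgetEdges (hb he) hl
  · obtain ⟨i, hi, rfl⟩ := mem_image.mp hf
    obtain ⟨j, -, hj, -⟩ := hC i hi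
    exact mem_filter.mpr ⟨mem_image_of_mem contrEdge hj, trivial⟩

theorem condPr_contr {k : ℕ} (hk : 1 ≤ k) (A : Finset (BBEdge ℕ) → Prop) [DecidablePred A] :
    CondPr (bbEdges (Vs2 k) (E2 k)) (Cev k) (fun H => A (contr H)) =
      #{a ∈ outerEdges.powerset | A (contr a ∪ vertEdges T1)} / 2 ^ #outerEdges := by
  have hsplit := condPr_comp_of_disjoint_union (u := outerEdges) (v := gadgetEdges k)
    disjoint_sdiff (C := Cev k) (R := Cev k) (fun a ha b _ => Cev_union_iff_right ha b)
    ⟨_, subset_rfl, Cev_gadgetEdges hk⟩ (f := contr) (g := (contr · ∪ vertEdges T1))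
    (fun a _ b hb hC => by rw [contr_union, contr_eq_vertEdges_of_subset_gadgetEdges hb hC]) A
  rwa [gadgetEdges, union_sdiff_of_subset (outerEdges_subset_bbEdges k)] at hsplit

/-- if the random subgraph `H` is uniformly distributed on the event
`C` in the bunkbed graph of `G₂ᵏ` (with `k ≥ 1`), then the contracted subgraph
`γ(H)` is distributed as the conditioned bunkbed model `𝓔_T` on `G₁` with
`T = {2,5,8}`: for every event `A`, the conditional probability that `γ(H) ∈ A`
given `C` equals the probability of `A` for a uniformly random subgraph of the
bunkbed graph of `G₁` conditioned on the vertical edges at `2, 5, 8` being present. -/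
theorem contraction_distribution (k : ℕ) (hk : 1 ≤ k) :
    ∀ A : Finset (BBEdge ℕ) → Prop,
      CondPr (bbEdges (Vs2 k) (E2 k)) (Cev k) (fun H => A (contr H)) =
        CondPr (bbEdges V1 E1) (postCond T1) A := by
  intro A
  classical
  rw [condPr_contr hk, condPr_postCond E1 (by decide : T1 ⊆ V1), outerEdges,
    card_image_of_injective _ liftEdge_injective, card_filter_powerset_image liftEdge_injective]
  congr 3
  exact filter_congr fun c hc => by
    rw [contr_image_liftEdge ((mem_powerset.mp hc).trans sdiff_subset)]
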